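/- For λ ∈ ℂ* and α ∈ ℂ, the Virasoro module Ω(λ,α) is irreducible if and only if α ≠ 0. -/

import Mathlib

/-!
Since `L_0` is multiplication by `X`, every submodule of `Ω(λ,α)` is an ideal of `ℂ[X]`, hence
generated by one polynomial `g`. For `α = 0` every `L_k` maps into the ideal `(X)`, a proper
nonzero submodule. For `α ≠ 0`, evaluating `g ∣ (X - kα) g(X - k)` at a root `z` of `g` of
maximal real part gives `z = kα` for `k = -1, -2`, which is impossible; so `g` is a constant.
-/

open TensorProduct

/-- Substitution `X ↦ X - k` on `ℂ[X]`, i.e. `f(X) ↦ f(X - k)`. -/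
noncomputable def shiftP (k : ℂ) : Polynomial ℂ →ₗ[ℂ] Polynomial ℂ :=
  (Polynomial.aeval (Polynomial.X - Polynomial.C k)).toLinearMap

/-- The operator `L_k` on the Virasoro module `Ω(λ,α) = ℂ[X]`:
`L_k f(X) = λ^k (X - kα) f(X - k)`. -/
noncomputable def omegaL (lam al : ℂ) (k : ℤ) : Polynomial ℂ →ₗ[ℂ] Polynomial ℂ :=
  (lam ^ k) •
    ((LinearMap.mulLeft ℂ (Polynomial.X - Polynomial.C ((k : ℂ) * al))).comp (shiftP (k : ℂ)))

open Polynomial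

lemma omegaL_apply (lam al : ℂ) (k : ℤ) (f : ℂ[X]) :
    omegaL lam al k f = lam ^ k • ((X - C ((k : ℂ) * al)) * f.comp (X - C (k : ℂ))) := by
  simp [omegaL, shiftP, comp_eq_aeval]

lemma omegaL_zero_apply (lam al : ℂ) (f : ℂ[X]) : omegaL lam al 0 f = X * f := by
  simp [omegaL_apply]

lemma X_dvd_omegaL_zero (lam : ℂ) (k : ℤ) (f : ℂ[X]) : X ∣ omegaL lam 0 k f := by
  rw [omegaL_apply, mul_zero, C_0, sub_zero, smul_eq_C_mul, mul_left_comm]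
  exact dvd_mul_right _ _

lemma mul_comp_mem_of_omegaL_mem {lam : ℂ} (hlam : lam ≠ 0) (al : ℂ) {N : Submodule ℂ ℂ[X]}
    (hN : ∀ k : ℤ, ∀ f ∈ N, omegaL lam al k f ∈ N) (k : ℤ) {f : ℂ[X]} (hf : f ∈ N) :
    (X - C ((k : ℂ) * al)) * f.comp (X - C (k : ℂ)) ∈ N := by
  have h := N.smul_mem (lam ^ k)⁻¹ (hN k f hf)
  rwa [omegaL_apply, smul_smul, inv_mul_cancel₀ (zpow_ne_zero k hlam), one_smul] at h

namespace Submodule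

lemma mul_mem_of_X_mul_mem {K : Type*} [CommSemiring K] (N : Submodule K K[X])
    (hX : ∀ f ∈ N, X * f ∈ N) (p : K[X]) {f : K[X]} (hf : f ∈ N) : p * f ∈ N := by
  induction p using Polynomial.induction_on with
  | C a => simpa [← smul_eq_C_mul] using N.smul_mem a hf
  | add p q hp hq => simpa [add_mul] using N.add_mem hp hq
  | monomial n a ih => simpa [pow_succ, mul_assoc, mul_left_comm _ X] using hX _ ih

lemma exists_forall_mem_iff_dvd_of_X_mul_mem {K : Type*} [Field K] (N : Submodule K K[X])
    (hX : ∀ f ∈ N, X * f ∈ N) : ∃ g : K[X], ∀ f, f ∈ N ↔ g ∣ f := by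
  let I : Ideal K[X] :=
    { N.toAddSubmonoid with smul_mem' := fun p _ hf => N.mul_mem_of_X_mul_mem hX p hf }
  obtain ⟨g, hg⟩ := (IsPrincipalIdealRing.principal I).principal
  exact ⟨g, fun f => (SetLike.ext_iff.mp hg f).trans Ideal.mem_span_singleton⟩

end Submodule

lemma isUnit_of_forall_dvd_mul_comp {al : ℂ} (hal : al ≠ 0) {g : ℂ[X]} (hg : g ≠ 0)
    (hdvd : ∀ k : ℤ, g ∣ (X - C ((k : ℂ) * al)) * g.comp (X - C (k : ℂ))) : IsUnit g := by
  by_contra hunit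
  obtain ⟨z₀, hz₀⟩ := IsAlgClosed.exists_root g fun h => hunit (isUnit_iff_degree_eq_zero.mpr h)
  obtain ⟨z, hz, hmax⟩ := g.roots.toFinset.exists_max_image Complex.re
    ⟨z₀, Multiset.mem_toFinset.mpr ((mem_roots hg).mpr hz₀)⟩
  have hz : g.IsRoot z := (mem_roots hg).mp (Multiset.mem_toFinset.mp hz)
  have hright (t : ℝ) (ht : 0 < t) : ¬ g.IsRoot (z + t) := fun hroot => by
    have := hmax _ (Multiset.mem_toFinset.mpr ((mem_roots hg).mpr hroot))
    simp only [Complex.add_re, Complex.ofReal_re, add_le_iff_nonpos_right] at this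
    linarith
  have heval (k : ℕ) (hk : 0 < k) : z + k * al = 0 := by
    obtain ⟨q, hq⟩ := hdvd (-k)
    have h := congrArg (eval z) hq
    simp only [eval_mul, hz.eq_zero, zero_mul, eval_sub, eval_X, eval_C, eval_comp] at h
    push_cast at h
    have hne : eval (z + k) g ≠ 0 := by exact_mod_cast hright k (by exact_mod_cast hk)
    simpa [sub_neg_eq_add, hne] using h.symm
  have h1 := heval 1 one_pos
  have h2 := heval 2 two_pos
  exact hal (by linear_combination h2 - h1)

lemma exists_omegaL_zero_invariant_ne_bot_ne_top (lam : ℂ) :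
    ∃ N : Submodule ℂ ℂ[X], (∀ k : ℤ, ∀ f ∈ N, omegaL lam 0 k f ∈ N) ∧ N ≠ ⊥ ∧ N ≠ ⊤ := by
  refine ⟨(Ideal.span {X}).restrictScalars ℂ, fun k f _ => ?_, ?_, ?_⟩
  · exact Ideal.mem_span_singleton.mpr (X_dvd_omegaL_zero lam k f)
  · exact (Submodule.ne_bot_iff _).mpr ⟨X, Ideal.mem_span_singleton_self X, X_ne_zero⟩
  · intro h
    have h1 : (1 : ℂ[X]) ∈ (Ideal.span {X}).restrictScalars ℂ := h ▸ Submodule.mem_top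
    exact not_isUnit_X (isUnit_of_dvd_one (Ideal.mem_span_singleton.mp h1))

lemma eq_bot_or_eq_top_of_omegaL_invariant {lam al : ℂ} (hlam : lam ≠ 0) (hal : al ≠ 0)
    (N : Submodule ℂ ℂ[X]) (hN : ∀ k : ℤ, ∀ f ∈ N, omegaL lam al k f ∈ N) : N = ⊥ ∨ N = ⊤ := by
  obtain ⟨g, hg⟩ := N.exists_forall_mem_iff_dvd_of_X_mul_mem fun f hf => by
    simpa [omegaL_zero_apply] using hN 0 f hf
  by_cases hg0 : g = 0
  · left
    ext f
    simp [hg, hg0]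
  · right
    have hunit : IsUnit g := isUnit_of_forall_dvd_mul_comp hal hg0 fun k =>
      (hg _).mp (mul_comp_mem_of_omegaL_mem hlam al hN k ((hg g).mpr dvd_rfl))
    exact Submodule.eq_top_iff'.mpr fun f => (hg f).mpr hunit.dvd

/-- For `λ ∈ ℂ*` and `α ∈ ℂ`, the Virasoro module `Ω(λ,α)` is irreducible
if and only if `α ≠ 0`. -/
theorem statement1 (lam al : ℂ) (hlam : lam ≠ 0) :
    ((∃ p : Polynomial ℂ, p ≠ 0) ∧
      ∀ N : Submodule ℂ (Polynomial ℂ),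
        (∀ k : ℤ, ∀ x ∈ N, omegaL lam al k x ∈ N) → N = ⊥ ∨ N = ⊤)
    ↔ al ≠ 0 := by
  constructor
  · rintro ⟨-, hirr⟩ rfl
    obtain ⟨N, hN, hbot, htop⟩ := exists_omegaL_zero_invariant_ne_bot_ne_top lam
    exact (hirr N hN).elim hbot htop
  · exact fun hal => ⟨⟨1, one_ne_zero⟩, eq_bot_or_eq_top_of_omegaL_invariant hlam hal⟩
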